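/- For all n ≥ 1, the parity-constrained Hanoi graph P^n contains a Hamiltonian cycle. -/

import Mathlib

/-- Parity constraint on a state: disc `d+1` (labelled `1,…,n`) may not sit on
peg `2` if it is even, nor on peg `1` if it is odd. -/
def pegOK (n : ℕ) (s : Fin n → Fin 4) : Prop :=
  ∀ d : Fin n, (Even ((d : ℕ) + 1) → s d ≠ 2) ∧ (Odd ((d : ℕ) + 1) → s d ≠ 1)

instance (n : ℕ) : DecidablePred (pegOK n) := fun s => by
  unfold pegOK; infer_instance

/-- Vertices of the parity-constrained Hanoi graph `P^n`. -/
abbrev PVertex (n : ℕ) := {s : Fin n → Fin 4 // pegOK n s}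

/-- The parity-constrained four-peg Hanoi graph `P^n`: two states are adjacent iff
they differ in exactly one coordinate `d` (a legal move of disc `d+1`) and no
smaller disc sits on either of the two pegs involved. -/
def PGraph (n : ℕ) : SimpleGraph (PVertex n) where
  Adj s t := ∃ d : Fin n,
    s.1 d ≠ t.1 d ∧ (∀ k, k ≠ d → s.1 k = t.1 k) ∧
    (∀ k, k < d → s.1 k ≠ s.1 d ∧ s.1 k ≠ t.1 d)
  symm := ⟨by
    rintro s t ⟨d, hne, heq, hlt⟩
    refine ⟨d, hne.symm, fun k hk => (heq k hk).symm, fun k hk => ?_⟩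
    have h := hlt k hk
    rw [← heq k (ne_of_lt hk)]
    exact ⟨h.2, h.1⟩⟩
  loopless := ⟨by rintro s ⟨d, hne, -⟩; exact hne rfl⟩

instance (n : ℕ) : DecidableRel (PGraph n).Adj := fun s t =>
  decidable_of_iff (∃ d : Fin n,
    s.1 d ≠ t.1 d ∧ (∀ k, k ≠ d → s.1 k = t.1 k) ∧
    (∀ k, k < d → s.1 k ≠ s.1 d ∧ s.1 k ≠ t.1 d)) Iff.rfl

/-!
`P^(n+1)` consists of three copies of `P^n`, one for each peg (`0`, the middle peg `p`, `3`)
allowed to the largest disc. Let `A`, `B`, `F` be the states with every disc on `0`, every disc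
on `3`, every disc on its middle peg. By induction, `P^n` has Hamiltonian paths `A → B`, `B → F`,
`F → A`: each lifts to `P^(n+1)` by running through the three copies in a suitable order, the
middle one backwards, where every change of copy moves the largest disc over a state whose
smaller discs avoid both pegs involved. Running the three paths through three different copies
and closing up with one more move of the largest disc gives a Hamiltonian cycle.
-/

open SimpleGraph

namespace SimpleGraph.Walk

variable {V : Type*} {G : SimpleGraph V}

lemma IsHamiltonian.reverse [DecidableEq V] {u v : V} {p : G.Walk u v} (hp : p.IsHamiltonian) :
    p.reverse.IsHamiltonian := fun a => by
  rw [support_reverse, List.count_reverse]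
  exact hp a

lemma count_support_append_cons [DecidableEq V] {u v v' w : V} (p : G.Walk u v)
    (h : G.Adj v v') (q : G.Walk v' w) (a : V) :
    (p.append (cons h q)).support.count a = p.support.count a + q.support.count a := by
  rw [support_append, support_cons, List.tail_cons, List.count_append]

lemma IsHamiltonian.count_support_map [DecidableEq V] {W : Type*} [DecidableEq W]
    {G' : SimpleGraph W} {f : G →g G'} (hf : Function.Injective f) {u v : V} {p : G.Walk u v}
    (hp : p.IsHamiltonian) (x : W) [Decidable (x ∈ Set.range f)] :
    (p.map f).support.count x = if x ∈ Set.range f then 1 else 0 := by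
  rw [support_map]
  split_ifs with hx
  · obtain ⟨y, rfl⟩ := hx
    rw [List.count_map_of_injective _ _ hf, hp y]
  · exact List.count_eq_zero_of_not_mem fun hx' => hx ((List.mem_map.mp hx').imp fun _ => And.right)

lemma IsHamiltonian.isHamiltonianCycle_cons [DecidableEq V] {u v : V} {p : G.Walk v u}
    (hp : p.IsHamiltonian) (h : G.Adj u v) (hlen : 2 ≤ p.length) :
    (cons h p).IsHamiltonianCycle := by
  refine ⟨isCycle_iff_isPath_tail_and_le_length.mpr ⟨?_, ?_⟩, ?_⟩
  · simpa using hp.isPath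
  · simp only [length_cons]; omega
  · simpa [IsHamiltonian] using hp

end SimpleGraph.Walk

def SimpleGraph.HasHamiltonianPath {V : Type*} [DecidableEq V] (G : SimpleGraph V) (u v : V) :
    Prop :=
  ∃ p : G.Walk u v, p.IsHamiltonian

def PegAllowed (d : ℕ) (q : Fin 4) : Prop :=
  (Even (d + 1) → q ≠ 2) ∧ (Odd (d + 1) → q ≠ 1)

def midPeg (d : ℕ) : Fin 4 := if Even d then 2 else 1

lemma pegAllowed_iff {d : ℕ} {q : Fin 4} : PegAllowed d q ↔ q = 0 ∨ q = midPeg d ∨ q = 3 := by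
  unfold PegAllowed midPeg
  rcases Nat.even_or_odd d with hd | hd <;> fin_cases q <;>
    simp [hd, Nat.even_add_one, Nat.odd_add_one]

lemma pegAllowed_zero (d : ℕ) : PegAllowed d 0 := pegAllowed_iff.mpr (Or.inl rfl)

lemma pegAllowed_three (d : ℕ) : PegAllowed d 3 := pegAllowed_iff.mpr (Or.inr (Or.inr rfl))

lemma pegAllowed_midPeg (d : ℕ) : PegAllowed d (midPeg d) :=
  pegAllowed_iff.mpr (Or.inr (Or.inl rfl))

lemma midPeg_ne_zero (d : ℕ) : midPeg d ≠ 0 := by unfold midPeg; split <;> decide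

lemma midPeg_ne_three (d : ℕ) : midPeg d ≠ 3 := by unfold midPeg; split <;> decide

def PVertex.init {n : ℕ} (v : PVertex (n + 1)) : PVertex n :=
  ⟨Fin.init v.1, fun i => by simpa [Fin.init] using v.2 i.castSucc⟩

lemma PVertex.pegAllowed_last {n : ℕ} (v : PVertex (n + 1)) :
    PegAllowed n (v.1 (Fin.last n)) := by
  simpa [PegAllowed] using v.2 (Fin.last n)

section Layers

variable {n : ℕ}

/-- The copy of `P^n` inside `P^(n+1)` in which the largest disc sits on peg `q`. -/
def layerHom (q : Fin 4) (hq : PegAllowed n q) : PGraph n →g PGraph (n + 1) where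
  toFun s := ⟨Fin.snoc s.1 q, fun d => by
    induction d using Fin.lastCases with
    | last => simpa [PegAllowed] using hq
    | cast i => simpa using s.2 i⟩
  map_rel' := by
    rintro s t ⟨d, hne, hsame, hfree⟩
    refine ⟨d.castSucc, by simpa using hne, fun k hk => ?_, fun k hk => ?_⟩
    · induction k using Fin.lastCases with
      | last => simp
      | cast i => simpa using hsame i (by rintro rfl; exact hk rfl)
    · induction k using Fin.lastCases with
      | last => exact absurd hk (not_lt.mpr (Fin.castSucc_lt_last d).le)
      | cast i => simpa using hfree i (Fin.castSucc_lt_castSucc_iff.mp hk)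

@[simp]
lemma layerHom_apply_last (q : Fin 4) (hq : PegAllowed n q) (s : PVertex n) :
    (layerHom q hq s).1 (Fin.last n) = q := by
  simp [layerHom]

@[simp]
lemma layerHom_apply_castSucc (q : Fin 4) (hq : PegAllowed n q) (s : PVertex n) (i : Fin n) :
    (layerHom q hq s).1 i.castSucc = s.1 i := by
  simp [layerHom]

lemma layerHom_injective (q : Fin 4) (hq : PegAllowed n q) : Function.Injective (layerHom q hq) :=
  fun s t h => Subtype.ext <| funext fun i => by
    simpa using congrFun (congrArg Subtype.val h) i.castSucc

lemma layerHom_init (v : PVertex (n + 1)) (hq : PegAllowed n (v.1 (Fin.last n))) :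
    layerHom (v.1 (Fin.last n)) hq v.init = v :=
  Subtype.ext (Fin.snoc_init_self v.1)

lemma mem_range_layerHom {q : Fin 4} (hq : PegAllowed n q) {x : PVertex (n + 1)} :
    x ∈ Set.range (layerHom q hq) ↔ x.1 (Fin.last n) = q := by
  refine ⟨?_, fun h => ⟨x.init, by subst h; exact layerHom_init x hq⟩⟩
  rintro ⟨s, rfl⟩
  exact layerHom_apply_last q hq s

lemma layerHom_adj_layerHom {q q' : Fin 4} (hq : PegAllowed n q) (hq' : PegAllowed n q')
    (hne : q ≠ q') {s : PVertex n} (hs : ∀ k, s.1 k ≠ q ∧ s.1 k ≠ q') :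
    (PGraph (n + 1)).Adj (layerHom q hq s) (layerHom q' hq' s) := by
  refine ⟨Fin.last n, by simpa using hne, fun k hk => ?_, fun k hk => ?_⟩
  · induction k using Fin.lastCases with
    | last => exact absurd rfl hk
    | cast i => simp
  · induction k using Fin.lastCases with
    | last => exact absurd hk (lt_irrefl _)
    | cast i => simpa using hs i

end Layers

lemma eq_or_eq_or_eq_of_pegAllowed {d : ℕ} {a b c q : Fin 4} (ha : PegAllowed d a)
    (hb : PegAllowed d b) (hc : PegAllowed d c) (hab : a ≠ b) (hac : a ≠ c) (hbc : b ≠ c)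
    (hq : PegAllowed d q) : q = a ∨ q = b ∨ q = c := by
  rw [pegAllowed_iff] at ha hb hc hq
  have := midPeg_ne_zero d
  have := midPeg_ne_three d
  grind

section Gluing

variable {n : ℕ}

lemma isHamiltonian_layers_append {a b c : Fin 4} (ha : PegAllowed n a) (hb : PegAllowed n b)
    (hc : PegAllowed n c) (hab : a ≠ b) (hac : a ≠ c) (hbc : b ≠ c)
    {x₁ y₁ x₂ y₂ x₃ y₃ : PVertex n} {w₁ : (PGraph n).Walk x₁ y₁} {w₂ : (PGraph n).Walk x₂ y₂}
    {w₃ : (PGraph n).Walk x₃ y₃} (hw₁ : w₁.IsHamiltonian) (hw₂ : w₂.IsHamiltonian)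
    (hw₃ : w₃.IsHamiltonian) (e₁ : (PGraph (n + 1)).Adj (layerHom a ha y₁) (layerHom b hb x₂))
    (e₂ : (PGraph (n + 1)).Adj (layerHom b hb y₂) (layerHom c hc x₃)) :
    ((w₁.map (layerHom a ha)).append (.cons e₁ ((w₂.map (layerHom b hb)).append
      (.cons e₂ (w₃.map (layerHom c hc)))))).IsHamiltonian := fun x => by
  classical
  rw [Walk.count_support_append_cons, Walk.count_support_append_cons,
    hw₁.count_support_map (layerHom_injective a ha),
    hw₂.count_support_map (layerHom_injective b hb),
    hw₃.count_support_map (layerHom_injective c hc)]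
  simp only [mem_range_layerHom]
  rcases eq_or_eq_or_eq_of_pegAllowed ha hb hc hab hac hbc x.pegAllowed_last with h | h | h <;>
    simp [h, hab, hac, hbc, hab.symm, hac.symm, hbc.symm]

/-- Run through the layers `a`, `b`, `c` in turn, the middle one backwards. -/
lemma SimpleGraph.HasHamiltonianPath.snake {x y : PVertex n}
    (h : (PGraph n).HasHamiltonianPath x y) {a b c : Fin 4} (ha : PegAllowed n a)
    (hb : PegAllowed n b) (hc : PegAllowed n c) (hab : a ≠ b) (hac : a ≠ c) (hbc : b ≠ c)
    (hy : ∀ k, y.1 k ≠ a ∧ y.1 k ≠ b) (hx : ∀ k, x.1 k ≠ b ∧ x.1 k ≠ c) :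
    (PGraph (n + 1)).HasHamiltonianPath (layerHom a ha x) (layerHom c hc y) :=
  let ⟨_, hw⟩ := h
  ⟨_, isHamiltonian_layers_append ha hb hc hab hac hbc hw hw.reverse hw
    (layerHom_adj_layerHom ha hb hab hy) (layerHom_adj_layerHom hb hc hbc hx)⟩

end Gluing

def PVertex.ofPegs (f : ℕ → Fin 4) (hf : ∀ d, PegAllowed d (f d)) (n : ℕ) : PVertex n :=
  ⟨fun d => f d, fun d => hf d⟩

@[simp]
lemma PVertex.ofPegs_apply (f : ℕ → Fin 4) (hf : ∀ d, PegAllowed d (f d)) {n : ℕ} (k : Fin n) :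
    (PVertex.ofPegs f hf n).1 k = f k := rfl

lemma layerHom_ofPegs (f : ℕ → Fin 4) (hf : ∀ d, PegAllowed d (f d)) (n : ℕ) :
    layerHom (f n) (hf n) (.ofPegs f hf n) = PVertex.ofPegs f hf (n + 1) :=
  Subtype.ext <| funext fun i => by
    induction i using Fin.lastCases with
    | last => simp
    | cast i => simp

abbrev stateA (n : ℕ) : PVertex n := .ofPegs (fun _ => 0) pegAllowed_zero n
abbrev stateB (n : ℕ) : PVertex n := .ofPegs (fun _ => 3) pegAllowed_three n
abbrev stateF (n : ℕ) : PVertex n := .ofPegs midPeg pegAllowed_midPeg n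

theorem hasHamiltonianPath_stateA_stateB_stateF (n : ℕ) :
    (PGraph n).HasHamiltonianPath (stateA n) (stateB n) ∧
      (PGraph n).HasHamiltonianPath (stateB n) (stateF n) ∧
      (PGraph n).HasHamiltonianPath (stateF n) (stateA n) := by
  induction n with
  | zero =>
    have hpath (u v : PVertex 0) : (PGraph 0).HasHamiltonianPath u v :=
      ⟨Walk.nil.copy rfl (Subsingleton.elim u v), .of_subsingleton⟩
    exact ⟨hpath _ _, hpath _ _, hpath _ _⟩
  | succ n ih =>
    obtain ⟨hAB, hBF, hFA⟩ := ih
    have h0p := (midPeg_ne_zero n).symm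
    have h3p := (midPeg_ne_three n).symm
    have h03 : (0 : Fin 4) ≠ 3 := by decide
    unfold stateA stateB stateF
    rw [← layerHom_ofPegs _ _ n, ← layerHom_ofPegs _ _ n, ← layerHom_ofPegs _ _ n]
    refine ⟨hAB.snake (b := midPeg n) _ (pegAllowed_midPeg n) _ h0p h03 h3p.symm ?_ ?_,
      hBF.snake (b := 0) _ (pegAllowed_zero n) _ h03.symm h3p h0p ?_ ?_,
      hFA.snake (b := 3) _ (pegAllowed_three n) _ h3p.symm h0p.symm h03.symm ?_ ?_⟩ <;>
    intro k <;> simp [h0p, h3p, midPeg_ne_zero, midPeg_ne_three]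

/-- For all `n ≥ 1`, the parity-constrained Hanoi graph `P^n` has a Hamiltonian
cycle. -/
theorem stmt15 : ∀ n : ℕ, 1 ≤ n →
    ∃ (v : PVertex n) (c : (PGraph n).Walk v v), c.IsHamiltonianCycle := by
  rintro (_ | m) hn
  · omega
  obtain ⟨⟨w₁, hw₁⟩, ⟨w₂, hw₂⟩, ⟨w₃, hw₃⟩⟩ := hasHamiltonianPath_stateA_stateB_stateF m
  have h0p := (midPeg_ne_zero m).symm
  have h3p := (midPeg_ne_three m).symm
  have h03 : (0 : Fin 4) ≠ 3 := by decide
  have h0 := pegAllowed_zero m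
  have h3 := pegAllowed_three m
  have hp := pegAllowed_midPeg m
  -- `(F,3) ⋯ (A,3) — (A,p) ⋯ (B,p) — (B,0) ⋯ (F,0)`, closed up by moving the largest disc of `F`.
  have hpath := isHamiltonian_layers_append h3 hp h0 h3p h03.symm h0p.symm hw₃ hw₁ hw₂
    (layerHom_adj_layerHom h3 hp h3p fun k => by simp [h0p])
    (layerHom_adj_layerHom hp h0 h0p.symm fun k => by simp [h3p])
  refine ⟨_, _, hpath.isHamiltonianCycle_cons
    (layerHom_adj_layerHom h0 h3 h03 fun k => by simp [midPeg_ne_zero, midPeg_ne_three]) ?_⟩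
  simp only [Walk.length_append, Walk.length_cons]
  omega
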